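/- There exists a constant C > 0 depending only on d such that for every measurable f : ℝ^d → [0,∞], ∫_{ℝ^d} |L^b|f(v) M(v) dv ≤ C ∫_{ℝ^d} f(v) M(v) dv, where |L^b|f(v) := ∫_{S^{d−1} × ℝ^d} ( f(v') + f(v̄') + f(v) + f(v̄) ) · ((v − v̄)·η)_+ / (1 + ‖v − v̄‖) · M(v̄) dη dv̄, with (v', v̄') = (v − ⟨v − v̄, η⟩η, v̄ + ⟨v − v̄, η⟩η) the hard-sphere scattering of (v, v̄, η) and dη the surface measure on the unit sphere S^{d−1}. In particular |L^b| is a bounded operator on L¹(ℝ^d, M(v) dv). -/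

import Mathlib

open MeasureTheory
open scoped RealInnerProductSpace ENNReal

noncomputable section

/-- Velocity space `ℝ^d` with the Euclidean structure. -/
abbrev Vel (d : ℕ) : Type := EuclideanSpace ℝ (Fin d)

/-- The standard Maxwellian `M(v) = (2π)^{-d/2} exp(-‖v‖²/2)`. -/
def maxwellian (d : ℕ) (v : Vel d) : ℝ :=
  (2 * Real.pi) ^ (-(d : ℝ) / 2) * Real.exp (-‖v‖ ^ 2 / 2)

/-- The surface measure on the unit sphere `S^{d-1}`. -/
def sphereMeasure (d : ℕ) : Measure (Metric.sphere (0 : Vel d) 1) :=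
  (volume : Measure (Vel d)).toSphere

/-- The collision operator `|L^b|` with bounded kernel, acting on nonnegative functions. -/
def absLb (d : ℕ) (f : Vel d → ℝ≥0∞) (v : Vel d) : ℝ≥0∞ :=
  ∫⁻ η : Metric.sphere (0 : Vel d) 1, ∫⁻ w : Vel d,
      (f (v - ⟪v - w, (η : Vel d)⟫ • (η : Vel d))
        + f (w + ⟪v - w, (η : Vel d)⟫ • (η : Vel d))
        + f v + f w)
        * ENNReal.ofReal
            (max ⟪v - w, (η : Vel d)⟫ 0 / (1 + ‖v - w‖) * maxwellian d w)
    ∂volume ∂(sphereMeasure d)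

end

noncomputable section Aux
namespace Stmt16Aux


/-- The collision transform as a linear map on the pair `(v, w)`. -/
def collT (d : ℕ) (η : Vel d) : (Vel d × Vel d) →ₗ[ℝ] (Vel d × Vel d) where
  toFun p := (p.1 - ⟪p.1 - p.2, η⟫ • η, p.2 + ⟪p.1 - p.2, η⟫ • η)
  map_add' p q := by
    simp only [Prod.fst_add, Prod.snd_add, inner_sub_left, inner_add_left, Prod.mk_add_mk,
      Prod.ext_iff]
    constructor <;> module
  map_smul' c p := by
    simp only [Prod.smul_fst, Prod.smul_snd, inner_sub_left, real_inner_smul_left,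
      Prod.smul_mk, RingHom.id_apply, Prod.ext_iff]
    constructor <;> module

theorem collT_invol (d : ℕ) (η : Vel d) (hη : ‖η‖ = 1) (p : Vel d × Vel d) :
    collT d η (collT d η p) = p := by
  have h1 : ⟪η, η⟫ = (1:ℝ) := by
    rw [real_inner_self_eq_norm_sq, hη]; norm_num
  simp only [collT, LinearMap.coe_mk, AddHom.coe_mk, Prod.ext_iff]
  simp only [inner_sub_left, inner_add_left, real_inner_smul_left, h1, mul_one]
  constructor <;> module

theorem collT_mp (d : ℕ) (η : Vel d) (hη : ‖η‖ = 1) :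
    MeasurePreserving (collT d η) (volume : Measure (Vel d × Vel d)) volume := by
  have hcomp : (collT d η) ∘ₗ (collT d η) = LinearMap.id := by
    apply LinearMap.ext; intro p
    simp [collT_invol d η hη]
  have hdet : (collT d η).det * (collT d η).det = 1 := by
    rw [← LinearMap.det_comp, hcomp, LinearMap.det_id]
  have habs : |((collT d η).det)⁻¹| = 1 := by
    rcases mul_self_eq_one_iff.mp hdet with h | h <;> rw [h] <;> norm_num
  have hne : (collT d η).det ≠ 0 := by
    intro h; rw [h] at hdet; simpa using hdet
  haveI : (volume : Measure (Vel d × Vel d)).IsAddHaarMeasure :=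
    (Measure.volume_eq_prod (Vel d) (Vel d)) ▸ Measure.prod.instIsAddHaarMeasure volume volume
  refine ⟨(collT d η).continuous_of_finiteDimensional.measurable, ?_⟩
  rw [Measure.map_linearMap_addHaar_eq_smul_addHaar _ hne, habs]
  simp

theorem maxwellian_nonneg (d : ℕ) (v : Vel d) : 0 ≤ maxwellian d v := by
  unfold maxwellian; positivity

theorem maxwellian_continuous (d : ℕ) : Continuous (maxwellian d) := by
  unfold maxwellian; fun_prop

/-- Energy conservation. -/
theorem maxwellian_collision (d : ℕ) (η : Vel d) (hη : ‖η‖ = 1) (v w : Vel d) :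
    maxwellian d (v - ⟪v - w, η⟫ • η) * maxwellian d (w + ⟪v - w, η⟫ • η)
      = maxwellian d v * maxwellian d w := by
  set c : ℝ := ⟪v - w, η⟫ with hc
  have hnorm : ‖v - c • η‖ ^ 2 + ‖w + c • η‖ ^ 2 = ‖v‖ ^ 2 + ‖w‖ ^ 2 := by
    have h1 : ⟪η, η⟫ = (1:ℝ) := by rw [real_inner_self_eq_norm_sq, hη]; norm_num
    rw [@norm_sub_sq_real, @norm_add_sq_real]
    simp only [real_inner_smul_right, inner_smul_left, real_inner_smul_left, h1,
      real_inner_self_eq_norm_sq, norm_smul, Real.norm_eq_abs, mul_pow, sq_abs, hη]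
    have hcv : c = ⟪v, η⟫ - ⟪w, η⟫ := by rw [hc, inner_sub_left]
    rw [hcv]; ring
  unfold maxwellian
  rw [mul_mul_mul_comm, ← Real.exp_add, mul_mul_mul_comm, ← Real.exp_add]
  congr 1
  congr 1
  linarith [hnorm]

/-- The Maxwellian is a probability density. -/
theorem maxwellian_lintegral (d : ℕ) :
    ∫⁻ v : Vel d, ENNReal.ofReal (maxwellian d v) = 1 := by
  have hexp_int : Integrable (fun v : Vel d => Real.exp (-(1/2) * ‖v‖^2)) := by
    have h := GaussianFourier.integrable_cexp_neg_mul_sq_norm_add (V := Vel d)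
      (b := (1/2:ℂ)) (by norm_num) 0 0
    refine h.norm.congr (Filter.Eventually.of_forall fun v => ?_)
    have he : ((-(1/2) * (‖v‖:ℂ)^2 + 0 * ((inner ℝ (0:Vel d) v : ℝ) : ℂ)))
        = ((-(1/2) * ‖v‖^2 : ℝ) : ℂ) := by push_cast; ring
    simp only []
    rw [he, Complex.norm_exp, Complex.ofReal_re]
  have hint : Integrable (maxwellian d) := by
    have := hexp_int.const_mul ((2 * Real.pi) ^ (-(d : ℝ) / 2))
    refine this.congr (Filter.Eventually.of_forall fun v => ?_)
    unfold maxwellian; ring_nf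
  have hval : ∫ v : Vel d, maxwellian d v = 1 := by
    unfold maxwellian
    rw [integral_const_mul]
    have : ∫ v : Vel d, Real.exp (-‖v‖ ^ 2 / 2) = ∫ v : Vel d, Real.exp (-(1/2) * ‖v‖^2) := by
      congr 1; ext v; ring_nf
    rw [this, GaussianFourier.integral_rexp_neg_mul_sq_norm (by norm_num : (0:ℝ) < 1/2),
      finrank_euclideanSpace_fin]
    rw [show Real.pi / (1/2) = 2 * Real.pi by ring]
    rw [← Real.rpow_add (by positivity), neg_div, neg_add_cancel, Real.rpow_zero]
  rw [← ofReal_integral_eq_lintegral_ofReal hint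
    (Filter.Eventually.of_forall fun v => maxwellian_nonneg d v), hval]
  simp


theorem per_eta (d : ℕ) (f : Vel d → ℝ≥0∞) (hf : Measurable f) (η : Vel d) (hη : ‖η‖ = 1) :
    ∫⁻ p : Vel d × Vel d,
        (f (p.1 - ⟪p.1 - p.2, η⟫ • η) + f (p.2 + ⟪p.1 - p.2, η⟫ • η) + f p.1 + f p.2)
          * ENNReal.ofReal (maxwellian d p.2) * ENNReal.ofReal (maxwellian d p.1)
      = 4 * ∫⁻ v : Vel d, f v * ENNReal.ofReal (maxwellian d v) := by
  set Mv : Vel d → ℝ≥0∞ := fun v => ENNReal.ofReal (maxwellian d v) with hMv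
  have hMvm : Measurable Mv := (maxwellian_continuous d).measurable.ennreal_ofReal
  set J : ℝ≥0∞ := ∫⁻ v : Vel d, f v * Mv v with hJ
  set T := collT d η with hT
  set φ1 : Vel d × Vel d → ℝ≥0∞ := fun p => f p.1 * Mv p.1 * Mv p.2 with hφ1
  set φ2 : Vel d × Vel d → ℝ≥0∞ := fun p => f p.2 * Mv p.2 * Mv p.1 with hφ2
  have hφ1m : Measurable φ1 :=
    ((hf.comp measurable_fst).mul (hMvm.comp measurable_fst)).mul (hMvm.comp measurable_snd)
  have hφ2m : Measurable φ2 :=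
    ((hf.comp measurable_snd).mul (hMvm.comp measurable_snd)).mul (hMvm.comp measurable_fst)
  have hTm : Measurable T := T.continuous_of_finiteDimensional.measurable
  have hpoint : ∀ p : Vel d × Vel d,
      (f (p.1 - ⟪p.1 - p.2, η⟫ • η) + f (p.2 + ⟪p.1 - p.2, η⟫ • η) + f p.1 + f p.2)
          * Mv p.2 * Mv p.1
        = φ1 (T p) + φ2 (T p) + φ1 p + φ2 p := by
    intro p
    have h1 : (T p).1 = p.1 - ⟪p.1 - p.2, η⟫ • η := rfl
    have h2 : (T p).2 = p.2 + ⟪p.1 - p.2, η⟫ • η := rfl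
    have hE : Mv (T p).1 * Mv (T p).2 = Mv p.1 * Mv p.2 := by
      rw [hMv]
      simp only [← ENNReal.ofReal_mul (maxwellian_nonneg _ _)]
      rw [h1, h2, maxwellian_collision d η hη p.1 p.2]
    rw [← h1, ← h2]
    simp only [hφ1, hφ2]
    rw [show f (T p).1 * Mv (T p).1 * Mv (T p).2 = f (T p).1 * (Mv (T p).1 * Mv (T p).2) by ring,
      show f (T p).2 * Mv (T p).2 * Mv (T p).1 = f (T p).2 * (Mv (T p).1 * Mv (T p).2) by ring,
      hE]
    ring
  calc ∫⁻ p : Vel d × Vel d,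
      (f (p.1 - ⟪p.1 - p.2, η⟫ • η) + f (p.2 + ⟪p.1 - p.2, η⟫ • η) + f p.1 + f p.2)
        * Mv p.2 * Mv p.1
      = ∫⁻ p : Vel d × Vel d, (φ1 (T p) + φ2 (T p) + φ1 p) + φ2 p := by
        apply lintegral_congr; intro p; rw [hpoint p]
    _ = (∫⁻ p, (φ1 (T p) + φ2 (T p)) + φ1 p) + ∫⁻ p, φ2 p := by
        rw [lintegral_add_right _ hφ2m]
    _ = ((∫⁻ p, φ1 (T p) + φ2 (T p)) + ∫⁻ p, φ1 p) + ∫⁻ p, φ2 p := by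
        rw [lintegral_add_right _ hφ1m]
    _ = (((∫⁻ p, φ1 (T p)) + ∫⁻ p, φ2 (T p)) + ∫⁻ p, φ1 p) + ∫⁻ p, φ2 p := by
        rw [lintegral_add_right _ (show Measurable fun p : Vel d × Vel d => φ2 (T p) from hφ2m.comp hTm)]
    _ = (((∫⁻ p, φ1 p) + ∫⁻ p, φ2 p) + ∫⁻ p, φ1 p) + ∫⁻ p, φ2 p := by
        rw [(collT_mp d η hη).lintegral_comp hφ1m, (collT_mp d η hη).lintegral_comp hφ2m]
    _ = 4 * J := by
        have e1 : ∫⁻ p : Vel d × Vel d, φ1 p = J := by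
          have : ∀ p : Vel d × Vel d, φ1 p = (fun v => f v * Mv v) p.1 * Mv p.2 := by
            intro p; simp only [hφ1]
          rw [lintegral_congr this, Measure.volume_eq_prod,
            lintegral_prod_mul (f := fun v => f v * Mv v) ((hf.mul hMvm).aemeasurable) hMvm.aemeasurable,
            ← hJ, hMv, maxwellian_lintegral d, mul_one]
        have e2 : ∫⁻ p : Vel d × Vel d, φ2 p = J := by
          have : ∀ p : Vel d × Vel d, φ2 p = Mv p.1 * ((fun v => f v * Mv v) p.2) := by
            intro p; simp only [hφ2]; ring
          rw [lintegral_congr this, Measure.volume_eq_prod,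
            lintegral_prod_mul (g := fun v => f v * Mv v) hMvm.aemeasurable ((hf.mul hMvm).aemeasurable),
            ← hJ, hMv, maxwellian_lintegral d, one_mul]
        rw [e1, e2]; ring

end Stmt16Aux
end Aux

open Stmt16Aux in
set_option maxHeartbeats 1000000 in
/-- `|L^b|` is bounded on `L¹(ℝ^d, M(v) dv)`. -/
theorem statement16 (d : ℕ) (hd : 2 ≤ d) :
    ∃ C : ℝ, 0 < C ∧
      ∀ f : Vel d → ℝ≥0∞, Measurable f →
        (∫⁻ v : Vel d, absLb d f v * ENNReal.ofReal (maxwellian d v))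
          ≤ ENNReal.ofReal C * ∫⁻ v : Vel d, f v * ENNReal.ofReal (maxwellian d v) := by
  classical
  haveI : IsFiniteMeasure (sphereMeasure d) := by unfold sphereMeasure; infer_instance
  set S : ℝ≥0∞ := sphereMeasure d Set.univ with hS
  have hS_ne_top : S ≠ ⊤ := measure_ne_top _ _
  have hS_pos : 0 < S := by
    rw [hS]; unfold sphereMeasure
    rw [Measure.toSphere_apply_univ, finrank_euclideanSpace_fin]
    refine ENNReal.mul_pos ?_ (Metric.measure_ball_pos volume 0 one_pos).ne'
    simp only [ne_eq, Nat.cast_eq_zero]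
    omega
  refine ⟨4 * S.toReal, by
    have := ENNReal.toReal_pos hS_pos.ne' hS_ne_top; linarith, ?_⟩
  intro f hf
  set Mv : Vel d → ℝ≥0∞ := fun v => ENNReal.ofReal (maxwellian d v) with hMv
  have hMvm : Measurable Mv := (maxwellian_continuous d).measurable.ennreal_ofReal
  set J : ℝ≥0∞ := ∫⁻ v : Vel d, f v * Mv v with hJ
  -- the dominating integrand
  set G : (Vel d × Metric.sphere (0 : Vel d) 1) × Vel d → ℝ≥0∞ := fun q =>
    (f (q.1.1 - ⟪q.1.1 - q.2, (q.1.2 : Vel d)⟫ • (q.1.2 : Vel d))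
      + f (q.2 + ⟪q.1.1 - q.2, (q.1.2 : Vel d)⟫ • (q.1.2 : Vel d))
      + f q.1.1 + f q.2) * Mv q.2 * Mv q.1.1 with hG
  have hcη : Continuous fun q : (Vel d × Metric.sphere (0 : Vel d) 1) × Vel d =>
      (q.1.2 : Vel d) := continuous_subtype_val.comp (continuous_snd.comp continuous_fst)
  have hcv : Continuous fun q : (Vel d × Metric.sphere (0 : Vel d) 1) × Vel d =>
      q.1.1 := continuous_fst.comp continuous_fst
  have hcw : Continuous fun q : (Vel d × Metric.sphere (0 : Vel d) 1) × Vel d =>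
      q.2 := continuous_snd
  have hcin : Continuous fun q : (Vel d × Metric.sphere (0 : Vel d) 1) × Vel d =>
      ⟪q.1.1 - q.2, (q.1.2 : Vel d)⟫ := Continuous.inner (hcv.sub hcw) hcη
  have hc1 : Continuous fun q : (Vel d × Metric.sphere (0 : Vel d) 1) × Vel d =>
      q.1.1 - ⟪q.1.1 - q.2, (q.1.2 : Vel d)⟫ • (q.1.2 : Vel d) := hcv.sub (hcin.smul hcη)
  have hc2 : Continuous fun q : (Vel d × Metric.sphere (0 : Vel d) 1) × Vel d =>
      q.2 + ⟪q.1.1 - q.2, (q.1.2 : Vel d)⟫ • (q.1.2 : Vel d) := hcw.add (hcin.smul hcη)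
  have hGm : Measurable G := by
    refine Measurable.mul (Measurable.mul ?_ (hMvm.comp measurable_snd))
      (hMvm.comp (measurable_fst.comp measurable_fst))
    exact (((hf.comp hc1.measurable).add (hf.comp hc2.measurable)).add
      (hf.comp (measurable_fst.comp measurable_fst))).add (hf.comp measurable_snd)
  have key : ∀ η : Metric.sphere (0 : Vel d) 1,
      ∫⁻ v : Vel d, ∫⁻ w : Vel d, G ((v, η), w) = 4 * J := by
    intro η
    have hη : ‖(η : Vel d)‖ = 1 := by
      have := η.2
      rwa [mem_sphere_zero_iff_norm] at this
    have hGη : Measurable fun p : Vel d × Vel d => G ((p.1, η), p.2) := by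
      have hm : Measurable fun p : Vel d × Vel d => ((p.1, η), p.2) :=
        (measurable_fst.prodMk measurable_const).prodMk measurable_snd
      exact hGm.comp hm
    rw [← lintegral_prod _ hGη.aemeasurable, ← Measure.volume_eq_prod]
    exact per_eta d f hf (η : Vel d) hη
  calc ∫⁻ v : Vel d, absLb d f v * Mv v
      ≤ ∫⁻ v : Vel d, ∫⁻ η : Metric.sphere (0 : Vel d) 1, ∫⁻ w : Vel d,
          G ((v, η), w) ∂volume ∂(sphereMeasure d) := by
        apply lintegral_mono; intro v
        show absLb d f v * Mv v ≤ _
        unfold absLb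
        rw [← lintegral_mul_const' (Mv v) _ ENNReal.ofReal_ne_top]
        apply lintegral_mono; intro η
        simp only []
        rw [← lintegral_mul_const' (Mv v) _ ENNReal.ofReal_ne_top]
        apply lintegral_mono; intro w
        simp only []
        refine mul_le_mul_left (mul_le_mul_right ?_ _) _
        apply ENNReal.ofReal_le_ofReal
        have hη : ‖(η : Vel d)‖ = 1 := by
          have := η.2; rwa [mem_sphere_zero_iff_norm] at this
        have hq : max ⟪v - w, (η : Vel d)⟫ 0 / (1 + ‖v - w‖) ≤ 1 := by
          rw [div_le_one (by positivity)]
          apply max_le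
          · calc ⟪v - w, (η : Vel d)⟫ ≤ ‖v - w‖ * ‖(η : Vel d)‖ := real_inner_le_norm _ _
              _ = ‖v - w‖ := by rw [hη, mul_one]
              _ ≤ 1 + ‖v - w‖ := by linarith [norm_nonneg (v - w)]
          · positivity
        exact mul_le_of_le_one_left (maxwellian_nonneg d w) hq
    _ = ∫⁻ η : Metric.sphere (0 : Vel d) 1, ∫⁻ v : Vel d, ∫⁻ w : Vel d,
          G ((v, η), w) ∂volume ∂volume ∂(sphereMeasure d) := by
        refine lintegral_lintegral_swap ?_
        apply Measurable.aemeasurable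
        have h0 : Measurable fun x : Vel d × Metric.sphere (0 : Vel d) 1 =>
            ∫⁻ w : Vel d, G (x, w) := hGm.lintegral_prod_right'
        exact h0.comp (measurable_fst.prodMk measurable_snd)
    _ = ∫⁻ _η : Metric.sphere (0 : Vel d) 1, 4 * J ∂(sphereMeasure d) := by
        apply lintegral_congr; intro η; exact key η
    _ = (4 * J) * S := lintegral_const _
    _ = ENNReal.ofReal (4 * S.toReal) * J := by
        rw [ENNReal.ofReal_mul (by norm_num), ENNReal.ofReal_toReal hS_ne_top,
          ENNReal.ofReal_ofNat]
        ring
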